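/- For every r ≥ 1, the polynomial d(z) = z³ - 2z^{r+3} + z² + z - 1 has a root ρ in the interval (1/2, 3/4), satisfies d(z) < 0 for all z in (-1, 0), d(0) = -1, and d'(z) > 0 for z ∈ [0, 1/2]; consequently ρ is the real root of d of smallest absolute value. -/

import Mathlib

/-- d(z) = z³ - 2z^{r+3} + z² + z - 1. -/
def dOdd (r : ℕ) (z : ℝ) : ℝ := z ^ 3 - 2 * z ^ (r + 3) + z ^ 2 + z - 1

/-!
On `(-1, 0)` every summand of `z³(1 - zʳ) + z(1 - z^(r+2)) + (z² - 1)` is `≤ 0` and the last is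
`< 0`, so `d` has no root there, and `d 0 = -1`. On `[0, 3/4]` the bound `(r + 3)(3/4)ʳ ≤ 3` gives
`d' z ≥ -3z² + 2z + 1 = (1 - z)(1 + 3z) > 0`, so `d` is strictly increasing there. Since
`d (1/2) < 0 < d (3/4)`, `d` has a root `ρ ∈ (1/2, 3/4)`, and every `z` with `|z| < ρ` lies in
`(-1, 0)` or in `[0, ρ)`, where `d z < d ρ = 0`.
-/

open Set

lemma dOdd_eq (r : ℕ) (z : ℝ) :
    dOdd r z = z ^ 3 * (1 - z ^ r) + z * (1 - z ^ (r + 2)) + (z ^ 2 - 1) := by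
  unfold dOdd; ring

lemma dOdd_zero (r : ℕ) : dOdd r 0 = -1 := by
  simp [dOdd]

lemma dOdd_neg_of_mem_Ioo {r : ℕ} {z : ℝ} (hz : z ∈ Ioo (-1) 0) : dOdd r z < 0 := by
  obtain ⟨hz₁, hz₀⟩ := hz
  have habs : |z| < 1 := abs_lt.2 ⟨hz₁, hz₀.trans one_pos⟩
  have hpow_le (n : ℕ) : z ^ n ≤ 1 :=
    (le_abs_self _).trans (by rw [abs_pow]; exact pow_le_one₀ (abs_nonneg z) habs.le)
  have hpow_lt {n : ℕ} (hn : n ≠ 0) : z ^ n < 1 :=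
    (le_abs_self _).trans_lt (by rw [abs_pow]; exact pow_lt_one₀ (abs_nonneg z) habs hn)
  have hcube : z ^ 3 * (1 - z ^ r) ≤ 0 :=
    mul_nonpos_of_nonpos_of_nonneg (Odd.pow_neg (by decide) hz₀).le (sub_nonneg.2 (hpow_le r))
  have hlin : z * (1 - z ^ (r + 2)) < 0 :=
    mul_neg_of_neg_of_pos hz₀ (sub_pos.2 (hpow_lt (by omega)))
  have hsq : z ^ 2 - 1 < 0 := sub_neg.2 (hpow_lt two_ne_zero)
  rw [dOdd_eq]
  linarith

lemma dOdd_half_neg (r : ℕ) : dOdd r (1 / 2) < 0 := by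
  have : (0 : ℝ) < (1 / 2) ^ (r + 3) := by positivity
  unfold dOdd
  linarith

lemma dOdd_three_quarters_pos {r : ℕ} (hr : 1 ≤ r) : 0 < dOdd r (3 / 4) := by
  have hpow : (3 / 4 : ℝ) ^ r ≤ 3 / 4 :=
    (pow_le_pow_of_le_one (by norm_num) (by norm_num) hr).trans_eq (pow_one _)
  have hsplit : (3 / 4 : ℝ) ^ (r + 3) = (3 / 4) ^ r * (27 / 64) := by
    rw [pow_add]; norm_num
  unfold dOdd
  rw [hsplit]
  linarith

lemma continuous_dOdd (r : ℕ) : Continuous (dOdd r) := by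
  unfold dOdd; fun_prop

lemma hasDerivAt_dOdd (r : ℕ) (z : ℝ) :
    HasDerivAt (dOdd r) (3 * z ^ 2 - 2 * ((r : ℝ) + 3) * z ^ (r + 2) + 2 * z + 1) z :=
  (((((hasDerivAt_pow 3 z).sub ((hasDerivAt_pow (r + 3) z).const_mul 2)).add
    (hasDerivAt_pow 2 z)).add (hasDerivAt_id' z)).sub_const 1).congr_deriv (by push_cast; ring)

lemma add_three_mul_three_quarters_pow_le (r : ℕ) : ((r : ℝ) + 3) * (3 / 4) ^ r ≤ 3 := by
  induction r with
  | zero => norm_num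
  | succ n ih =>
    have : (0 : ℝ) ≤ n * (3 / 4) ^ n := by positivity
    push_cast
    rw [pow_succ]
    nlinarith

lemma deriv_dOdd_pos (r : ℕ) {z : ℝ} (hz : z ∈ Icc (0 : ℝ) (3 / 4)) :
    0 < deriv (dOdd r) z := by
  obtain ⟨hz₀, hz₁⟩ := hz
  have hcoef : ((r : ℝ) + 3) * z ^ r ≤ 3 :=
    (mul_le_mul_of_nonneg_left (pow_le_pow_left₀ hz₀ hz₁ r) (by positivity)).trans
      (add_three_mul_three_quarters_pow_le r)
  have hhigh : 2 * ((r : ℝ) + 3) * z ^ (r + 2) ≤ 6 * z ^ 2 := by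
    have : 2 * ((r : ℝ) + 3) * z ^ (r + 2) = 2 * (((r : ℝ) + 3) * z ^ r) * z ^ 2 := by ring
    rw [this]
    nlinarith [sq_nonneg z]
  rw [(hasDerivAt_dOdd r z).deriv]
  nlinarith [mul_nonneg hz₀ (sub_nonneg.2 hz₁)]

lemma strictMonoOn_dOdd (r : ℕ) : StrictMonoOn (dOdd r) (Icc 0 (3 / 4)) :=
  strictMonoOn_of_deriv_pos (convex_Icc _ _) (continuous_dOdd r).continuousOn
    fun _ hz => deriv_dOdd_pos r (interior_subset hz)

theorem dOdd_smallest_root (r : ℕ) (hr : 1 ≤ r) :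
    (∀ z ∈ Set.Ioo (-1 : ℝ) 0, dOdd r z < 0) ∧
    dOdd r 0 = -1 ∧
    (∀ z ∈ Set.Icc (0 : ℝ) (1 / 2), 0 < deriv (dOdd r) z) ∧
    (∃ ρ ∈ Set.Ioo (1 / 2 : ℝ) (3 / 4), dOdd r ρ = 0 ∧
      ∀ z : ℝ, dOdd r z = 0 → |ρ| ≤ |z|) := by
  obtain ⟨ρ, hρ, hρ_root⟩ : ∃ ρ ∈ Ioo (1 / 2 : ℝ) (3 / 4), dOdd r ρ = 0 :=
    intermediate_value_Ioo (by norm_num) (continuous_dOdd r).continuousOn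
      ⟨dOdd_half_neg r, dOdd_three_quarters_pos hr⟩
  refine ⟨fun z hz => dOdd_neg_of_mem_Ioo hz, dOdd_zero r,
    fun z hz => deriv_dOdd_pos r ⟨hz.1, hz.2.trans (by norm_num)⟩, ρ, hρ, hρ_root, ?_⟩
  intro z hz_root
  by_contra! hlt
  rw [abs_of_pos (show 0 < ρ by linarith [hρ.1])] at hlt
  obtain ⟨hz₁, hz₂⟩ := abs_lt.1 hlt
  rcases lt_or_ge z 0 with hneg | hnonneg
  · exact (dOdd_neg_of_mem_Ioo ⟨by linarith [hρ.2], hneg⟩).ne hz_root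
  · have := strictMonoOn_dOdd r ⟨hnonneg, by linarith [hρ.2]⟩ ⟨by linarith [hρ.1], hρ.2.le⟩ hz₂
    linarith
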